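/- Let A : [0,∞) → ℝ be continuous, and define q_linear(x,y,T) = (2y/σ_A²(T)) · (m_{1,A}(T)m_{2,A}(T) - σ_A²(T) + m_{1,A}(T)x). Then for each fixed y > 0, the function (x,T) ↦ q_linear(x,y,T) is a classical solution on {x ∈ ℝ, T > 0} of the Hamilton–Jacobi equation ∂q/∂T = -λ(x,y,T)∂q/∂x - (1/2)(∂q/∂x)², where λ(x,y,T) = (A(T) + 1/σ_A²(T))x - 1 + m_{2,A}(T)/σ_A²(T) - m_{1,A}(T)y/σ_A²(T). -/

import Mathlib

noncomputable def m1 (A : ℝ → ℝ) (s T : ℝ) : ℝ := Real.exp (∫ u in s..T, A u)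

noncomputable def m2 (A : ℝ → ℝ) (s T : ℝ) : ℝ :=
  ∫ u in s..T, Real.exp (∫ v in u..T, A v)

noncomputable def sig2 (A : ℝ → ℝ) (s T : ℝ) : ℝ :=
  ∫ u in s..T, Real.exp (2 * ∫ v in u..T, A v)

/-- The drift of the conditioned bridge process. -/
noncomputable def lam (A : ℝ → ℝ) (x y T : ℝ) : ℝ :=
  (A T + 1 / sig2 A 0 T) * x - 1 + m2 A 0 T / sig2 A 0 T
    - m1 A 0 T * y / sig2 A 0 T

/-- The linear solution of the Hamilton–Jacobi equation. -/
noncomputable def qlin (A : ℝ → ℝ) (x y T : ℝ) : ℝ :=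
  (2 * y / sig2 A 0 T) * (m1 A 0 T * m2 A 0 T - sig2 A 0 T + m1 A 0 T * x)

/-! The three moments are first-order linear ODEs in `T`: `m₁' = A m₁`, `m₂' = 1 + A m₂` and
`(σ²)' = 1 + 2 A σ²`. Substituting them, together with `∂ₓ q = 2 y m₁ / σ²`, into the
Hamilton–Jacobi equation reduces it to a rational identity. The ODEs for `m₂` and `σ²` come
from factoring `exp (c ∫ᵤᵀ A) = exp (c ∫ₛᵀ A) · exp (-c ∫ₛᵘ A)`, which turns the integral
into a product of an exponential and a primitive. -/

open Real intervalIntegral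

section Moments

variable {A : ℝ → ℝ}

theorem integral_exp_mul_integral_eq (hA : Continuous A) (c s T : ℝ) :
    ∫ u in s..T, exp (c * ∫ v in u..T, A v)
      = exp (c * ∫ v in s..T, A v) * ∫ u in s..T, exp (-(c * ∫ v in s..u, A v)) := by
  rw [← integral_const_mul]
  refine integral_congr fun u _ => ?_
  rw [← integral_interval_sub_left (hA.intervalIntegrable s T) (hA.intervalIntegrable s u),
    ← exp_add]
  ring_nf

theorem continuous_exp_mul_primitive (hA : Continuous A) (c s : ℝ) :
    Continuous fun u => exp (c * ∫ v in s..u, A v) :=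
  (continuous_const.mul (continuous_primitive hA.intervalIntegrable s)).rexp

theorem hasDerivAt_integral_exp_mul_integral (hA : Continuous A) (c s T : ℝ) :
    HasDerivAt (fun t => ∫ u in s..t, exp (c * ∫ v in u..t, A v))
      (1 + c * A T * ∫ u in s..T, exp (c * ∫ v in u..T, A v)) T := by
  have hexp : HasDerivAt (fun t => exp (c * ∫ v in s..t, A v))
      (exp (c * ∫ v in s..T, A v) * (c * A T)) T :=
    (((hA.integral_hasStrictDerivAt s T).hasDerivAt).const_mul c).exp
  have hprim :=
    ((continuous_exp_mul_primitive hA (-c) s).integral_hasStrictDerivAt s T).hasDerivAt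
  simp only [neg_mul] at hprim
  simp only [integral_exp_mul_integral_eq hA c s]
  refine (hexp.mul hprim).congr_deriv ?_
  rw [mul_assoc, ← exp_add, add_neg_cancel, exp_zero]
  ring

theorem hasDerivAt_m1 (hA : Continuous A) (s T : ℝ) :
    HasDerivAt (m1 A s) (A T * m1 A s T) T := by
  rw [mul_comm]
  exact ((hA.integral_hasStrictDerivAt s T).hasDerivAt).exp

theorem hasDerivAt_m2 (hA : Continuous A) (s T : ℝ) :
    HasDerivAt (m2 A s) (1 + A T * m2 A s T) T := by
  have h := hasDerivAt_integral_exp_mul_integral hA 1 s T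
  simp only [one_mul] at h
  exact h

theorem hasDerivAt_sig2 (hA : Continuous A) (s T : ℝ) :
    HasDerivAt (sig2 A s) (1 + 2 * A T * sig2 A s T) T :=
  hasDerivAt_integral_exp_mul_integral hA 2 s T

theorem sig2_pos (hA : Continuous A) {s T : ℝ} (hsT : s < T) : 0 < sig2 A s T := by
  rw [sig2, integral_exp_mul_integral_eq hA]
  refine mul_pos (exp_pos _) (intervalIntegral_pos_of_pos ?_ (fun _ => exp_pos _) hsT)
  simpa only [neg_mul] using (continuous_exp_mul_primitive hA (-2) s).intervalIntegrable s T

end Moments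

theorem hasDerivAt_qlin_x (A : ℝ → ℝ) (x y T : ℝ) :
    HasDerivAt (fun x' => qlin A x' y T) (2 * y / sig2 A 0 T * m1 A 0 T) x :=
  ((((hasDerivAt_id' x).const_mul (m1 A 0 T)).const_add _).const_mul _).congr_deriv
    (by rw [mul_one])

theorem stmt_10_general (A : ℝ → ℝ) (hA : Continuous A) (y : ℝ) :
    ∀ x : ℝ, ∀ T > (0:ℝ),
      deriv (fun T' => qlin A x y T') T =
        -lam A x y T * deriv (fun x' => qlin A x' y T) x
          - 1/2 * (deriv (fun x' => qlin A x' y T) x)^2 := by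
  intro x T hT
  have hs := (sig2_pos hA hT).ne'
  have hm1 := hasDerivAt_m1 hA 0 T
  have hsig := hasDerivAt_sig2 hA 0 T
  have hcoef : HasDerivAt (fun t => 2 * y / sig2 A 0 t) _ T :=
    (hasDerivAt_const T (2 * y)).div hsig hs
  have hqT : HasDerivAt (fun T' => qlin A x y T') _ T :=
    hcoef.mul (((hm1.mul (hasDerivAt_m2 hA 0 T)).sub hsig).add (hm1.mul_const x))
  rw [hqT.deriv, (hasDerivAt_qlin_x A x y T).deriv, lam]
  field_simp
  ring

theorem stmt_10 (A : ℝ → ℝ) (hA : Continuous A) (y : ℝ) (hy : 0 < y) :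
    ∀ x : ℝ, ∀ T > (0:ℝ),
      deriv (fun T' => qlin A x y T') T =
        -lam A x y T * deriv (fun x' => qlin A x' y T) x
          - 1/2 * (deriv (fun x' => qlin A x' y T) x)^2 :=
  stmt_10_general A hA y
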